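/- arXiv:2404.00436 — 3 statements merged into one kernel-verified Lean document; each statement's English description precedes it below -/
import Mathlib

section
/- The group with presentation ⟨a, b | b(ba)^n = (ba)^n a, ab(ba)^{n-1} = b(ba)^{n-1}b⟩ is isomorphic to the infinite cyclic group ℤ, for every positive integer n. -/
/-- The free group on two generators. -/
abbrev F : Type := FreeGroup (Fin 2)

/-- The generator `a`. -/
def a : F := FreeGroup.of 0

/-- The generator `b`. -/
def b : F := FreeGroup.of 1

/-- The relators `b(ba)^n ((ba)^n a)⁻¹` and `ab(ba)^{n-1} (b(ba)^{n-1}b)⁻¹` of the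
fundamental group of the welded knot obtained from the standard `(2, 2n+1)` torus knot
diagram by welding one crossing. -/
def rels (n : ℕ) : Set F :=
  {b * (b * a) ^ n * ((b * a) ^ n * a)⁻¹,
   a * b * (b * a) ^ (n - 1) * (b * (b * a) ^ (n - 1) * b)⁻¹}

/-!
Multiplying the second relation on the right by `a` turns its right-hand side into `b(ba)^n`,
which the first relation rewrites to `(ba)^n a`; cancelling gives `ab = ba`. Once `a` and `b`
commute, `b` commutes with `(ba)^n`, and the first relation becomes `(ba)^n b = (ba)^n a`, so
`a = b`. The group is therefore cyclic, generated by `a`, and the exponent sum, under which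
both relators vanish, identifies it with `ℤ`.
-/

section TorusWeldRelations

variable {G : Type*} [Group G] {x y : G} {n : ℕ}

lemma commute_of_torus_weld_relations (hn : 0 < n)
    (h₁ : y * (y * x) ^ n = (y * x) ^ n * x)
    (h₂ : x * y * (y * x) ^ (n - 1) = y * (y * x) ^ (n - 1) * y) : Commute x y := by
  have hpow : (y * x) ^ n = (y * x) * (y * x) ^ (n - 1) := by
    rw [← pow_succ', Nat.sub_add_cancel hn]
  have : x * y * (y * x) ^ (n - 1) * x = y * x * (y * x) ^ (n - 1) * x :=
    calc x * y * (y * x) ^ (n - 1) * x = y * ((y * x) ^ (n - 1) * (y * x)) := by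
          rw [h₂]; group
      _ = (y * x) ^ n * x := by rw [← pow_succ, Nat.sub_add_cancel hn, h₁]
      _ = y * x * (y * x) ^ (n - 1) * x := by rw [hpow, mul_assoc]
  exact mul_right_cancel (mul_right_cancel this)

lemma eq_of_torus_weld_relations (hn : 0 < n)
    (h₁ : y * (y * x) ^ n = (y * x) ^ n * x)
    (h₂ : x * y * (y * x) ^ (n - 1) = y * (y * x) ^ (n - 1) * y) : x = y := by
  have hyx : Commute y (y * x) :=
    (Commute.refl y).mul_right (commute_of_torus_weld_relations hn h₁ h₂).symm
  exact mul_left_cancel (h₁.symm.trans (hyx.pow_right n).eq)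

end TorusWeldRelations

lemma map_rels_eq_one {H : Type*} [Group H] (φ : F →* H) (hab : φ a = φ b) {n : ℕ} {r : F}
    (hr : r ∈ rels n) : φ r = 1 := by
  rcases hr with rfl | rfl <;>
    simp only [map_mul, map_pow, map_inv, hab, ← pow_two, ← pow_mul] <;> group

lemma mk_a_eq_mk_b {n : ℕ} (hn : 0 < n) :
    PresentedGroup.mk (rels n) a = PresentedGroup.mk (rels n) b := by
  have h₁ := PresentedGroup.mk_eq_mk_of_mul_inv_mem (rels := rels n) (Set.mem_insert _ _)
  have h₂ := PresentedGroup.mk_eq_mk_of_mul_inv_mem (rels := rels n) (Set.mem_insert_of_mem _ rfl)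
  simp only [map_mul, map_pow] at h₁ h₂
  exact eq_of_torus_weld_relations hn h₁ h₂

def PresentedGroup.mulEquivMultiplicativeIntOfOfEq {α : Type*} {rels : Set (FreeGroup α)} (i : α)
    (hrels : ∀ r ∈ rels, FreeGroup.lift (fun _ ↦ Multiplicative.ofAdd (1 : ℤ)) r = 1)
    (hof : ∀ j, (PresentedGroup.of j : PresentedGroup rels) = PresentedGroup.of i) :
    PresentedGroup rels ≃* Multiplicative ℤ :=
  MonoidHom.toMulEquiv (PresentedGroup.toGroup hrels) (zpowersHom _ (PresentedGroup.of i))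
    (PresentedGroup.ext fun j ↦ by simp [hof j])
    (MonoidHom.ext_mint (by simp))

/-- The group `⟨a, b | b(ba)^n = (ba)^n a, ab(ba)^{n-1} = b(ba)^{n-1}b⟩` is isomorphic
to the infinite cyclic group `ℤ`, for every positive integer `n`. -/
theorem presentedGroup_torus_one_weld_iso_int (n : ℕ) (hn : 0 < n) :
    Nonempty (PresentedGroup (rels n) ≃* Multiplicative ℤ) := by
  have hof (j : Fin 2) : (PresentedGroup.of j : PresentedGroup (rels n)) = PresentedGroup.of 0 := by
    fin_cases j
    · rfl
    · exact (mk_a_eq_mk_b hn).symm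
  exact ⟨PresentedGroup.mulEquivMultiplicativeIntOfOfEq 0
    (fun _ ↦ map_rels_eq_one _ (by simp [a, b])) hof⟩
end

section
/- In the group presented by ⟨a, b | b(ba)^n = (ba)^n a, ab(ba)^{n-1} = b(ba)^{n-1}b⟩, the relation ab = ba holds. -/
/-- The quotient map from the free group to the presented group. -/
def π (n : ℕ) : F →* PresentedGroup (rels n) :=
  QuotientGroup.mk' (Subgroup.normalClosure (rels n))

/-! With `c = ba` and `n = k + 1`, the two relations give
`ab·cᵏa = b·cᵏ·ba = b·cⁿ = cⁿ·a = ba·cᵏa`, and cancelling `cᵏa` on the right leaves `ab = ba`. -/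

theorem mul_comm_of_presentation_relations {M : Type*} [Monoid M] [IsRightCancelMul M]
    {x y : M} {k : ℕ} (h₁ : y * (y * x) ^ (k + 1) = (y * x) ^ (k + 1) * x)
    (h₂ : x * y * (y * x) ^ k = y * (y * x) ^ k * y) : x * y = y * x := by
  apply mul_right_cancel (b := (y * x) ^ k * x)
  calc x * y * ((y * x) ^ k * x) = x * y * (y * x) ^ k * x := by simp only [mul_assoc]
    _ = y * (y * x) ^ k * y * x := by rw [h₂]
    _ = y * (y * x) ^ (k + 1) := by rw [pow_succ]; simp only [mul_assoc]
    _ = (y * x) ^ (k + 1) * x := h₁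
    _ = y * x * ((y * x) ^ k * x) := by rw [pow_succ']; simp only [mul_assoc]

/-- In the group presented by `⟨a, b | b(ba)^n = (ba)^n a, ab(ba)^{n-1} = b(ba)^{n-1}b⟩`,
the relation `ab = ba` holds. -/
theorem ab_eq_ba_in_presentedGroup (n : ℕ) (hn : 0 < n) :
    π n (a * b) = π n (b * a) := by
  obtain ⟨k, rfl⟩ : ∃ k, n = k + 1 := ⟨n - 1, by omega⟩
  have h₁ : π (k + 1) (b * (b * a) ^ (k + 1)) = π (k + 1) ((b * a) ^ (k + 1) * a) :=
    PresentedGroup.mk_eq_mk_of_mul_inv_mem (Set.mem_insert _ _)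
  have h₂ : π (k + 1) (a * b * (b * a) ^ k) = π (k + 1) (b * (b * a) ^ k * b) :=
    PresentedGroup.mk_eq_mk_of_mul_inv_mem (by simp [rels])
  simp only [map_mul, map_pow] at h₁ h₂ ⊢
  exact mul_comm_of_presentation_relations h₁ h₂
end

section
/- In the group presented by ⟨a, b | b(ba)^n = (ba)^n a, ab(ba)^{n-1} = b(ba)^{n-1}b⟩, the relation a = b holds. -/
section

variable {G : Type*} [Group G] {x y : G} {k : ℕ}

theorem mul_pow_eq_pow_mul_of_mul_pow_succ_eq
    (h : y * (y * x) ^ (k + 1) = (y * x) ^ (k + 1) * x) :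
    y * (x * y) ^ k = (x * y) ^ k * x := by
  have hpow : (y * x) ^ (k + 1) = y * ((x * y) ^ k * x) := by
    rw [pow_succ', mul_assoc, mul_pow_mul]
  rwa [hpow, mul_assoc y _ x, mul_left_cancel_iff, ← mul_assoc, mul_right_cancel_iff] at h

theorem commute_of_mul_pow_eq_pow_mul (h₁ : y * (x * y) ^ k = (x * y) ^ k * x)
    (h₂ : x * y * (y * x) ^ k = y * (y * x) ^ k * y) : Commute x y := by
  have hconj : x * y * x⁻¹ * (x * y) ^ k * x = y * (x * y) ^ k * x := by
    calc x * y * x⁻¹ * (x * y) ^ k * x = x * y * x⁻¹ * (x * (y * x) ^ k) := by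
          rw [mul_assoc _ _ x, mul_pow_mul]
      _ = y * (y * x) ^ k * y := by rw [← h₂]; group
      _ = y * ((x * y) ^ k * x) := by rw [mul_assoc, mul_pow_mul, h₁]
      _ = y * (x * y) ^ k * x := (mul_assoc _ _ _).symm
  have hxy : x * y * x⁻¹ = y := by
    rwa [mul_right_cancel_iff, mul_right_cancel_iff] at hconj
  exact mul_inv_eq_iff_eq_mul.mp hxy

theorem eq_of_mul_pow_succ_eq_of_mul_mul_pow_eq
    (h₁ : y * (y * x) ^ (k + 1) = (y * x) ^ (k + 1) * x)
    (h₂ : x * y * (y * x) ^ k = y * (y * x) ^ k * y) : x = y := by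
  have hy := mul_pow_eq_pow_mul_of_mul_pow_succ_eq h₁
  have hxy := commute_of_mul_pow_eq_pow_mul hy h₂
  have hcomm : Commute y ((x * y) ^ k) := (hxy.symm.mul_right (Commute.refl y)).pow_right k
  rw [hcomm.eq, mul_left_cancel_iff] at hy
  exact hy.symm

end

/-- In the group presented by `⟨a, b | b(ba)^n = (ba)^n a, ab(ba)^{n-1} = b(ba)^{n-1}b⟩`,
the relation `a = b` holds. -/
theorem a_eq_b_in_presentedGroup (n : ℕ) (hn : 0 < n) :
    π n a = π n b := by
  obtain ⟨k, rfl⟩ : ∃ k, n = k + 1 := ⟨n - 1, by omega⟩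
  have h₁ : π (k + 1) (b * (b * a) ^ (k + 1)) = π (k + 1) ((b * a) ^ (k + 1) * a) :=
    PresentedGroup.mk_eq_mk_of_mul_inv_mem (Set.mem_insert _ _)
  have h₂ : π (k + 1) (a * b * (b * a) ^ k) = π (k + 1) (b * (b * a) ^ k * b) :=
    PresentedGroup.mk_eq_mk_of_mul_inv_mem (Set.mem_insert_of_mem _ rfl)
  simp only [map_mul, map_pow] at h₁ h₂
  exact eq_of_mul_pow_succ_eq_of_mul_mul_pow_eq h₁ h₂
end
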